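/- arXiv:2012.04445 — 4 statements merged into one kernel-verified Lean document; each statement's English description precedes it below -/
import Mathlib

section
/- Let U, V, W be types with U and W nonempty, and let f, f' : U → V → ℝ and g, g' : V → W → ℝ be functions that are strictly positive everywhere. If f(u,v)·g(v,w) = f'(u,v)·g'(v,w) for all u ∈ U, v ∈ V, w ∈ W, then there exists a function c : V → ℝ with c(v) > 0 for every v, such that f'(u,v) = c(v)·f(u,v) for all u, v, and g'(v,w) = g(v,w)/c(v) for all v, w. -/
theorem shared_covariate_factorization_identified_up_to_scale
    {U V W : Type*} [Nonempty U] [Nonempty W]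
    (f f' : U → V → ℝ) (g g' : V → W → ℝ)
    (hf : ∀ u v, 0 < f u v) (hf' : ∀ u v, 0 < f' u v)
    (hg : ∀ v w, 0 < g v w) (hg' : ∀ v w, 0 < g' v w)
    (heq : ∀ (u : U) (v : V) (w : W), f u v * g v w = f' u v * g' v w) :
    ∃ c : V → ℝ, (∀ v, 0 < c v) ∧ (∀ u v, f' u v = c v * f u v) ∧
      (∀ v w, g' v w = g v w / c v) := by
  obtain ⟨u₀⟩ := ‹Nonempty U›
  obtain ⟨w₀⟩ := ‹Nonempty W›
  refine ⟨fun v => f' u₀ v / f u₀ v, fun v => div_pos (hf' u₀ v) (hf u₀ v), ?_, ?_⟩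
  · intro u v
    have h1 := heq u v w₀
    have h2 := heq u₀ v w₀
    have hg'0 := (hg' v w₀).ne'
    have hf0 := (hf u₀ v).ne'
    field_simp
    nlinarith [hg v w₀, hf u v, hf' u v, hf' u₀ v]
  · intro v w
    have h2 := heq u₀ v w
    have hf'0 := (hf' u₀ v).ne'
    field_simp
    linarith
end

section
/- Let A and B be nonempty types, and let f, f' : A → ℝ and g, g' : B → ℝ be functions all taking values in the half-open interval (0, 1]. Suppose f(x)·g(y) = f'(x)·g'(y) for all x ∈ A, y ∈ B, and that there exist x₀ ∈ A with f(x₀) = 1 and y₀ ∈ B with g(y₀) = 1. Then f'(x) = f(x) for all x ∈ A and g'(y) = g(y) for all y ∈ B. (The scale factor equals 1 and the unobserved probabilities are exactly identified.) -/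
theorem exact_identification_under_A3
    {A B : Type*} [Nonempty A] [Nonempty B]
    (f f' : A → ℝ) (g g' : B → ℝ)
    (hf : ∀ x, f x ∈ Set.Ioc (0 : ℝ) 1) (hf' : ∀ x, f' x ∈ Set.Ioc (0 : ℝ) 1)
    (hg : ∀ y, g y ∈ Set.Ioc (0 : ℝ) 1) (hg' : ∀ y, g' y ∈ Set.Ioc (0 : ℝ) 1)
    (heq : ∀ (x : A) (y : B), f x * g y = f' x * g' y)
    (hx₀ : ∃ x₀ : A, f x₀ = 1) (hy₀ : ∃ y₀ : B, g y₀ = 1) :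
    (∀ x, f' x = f x) ∧ (∀ y, g' y = g y) := by
  obtain ⟨x₀, hx⟩ := hx₀
  obtain ⟨y₀, hy⟩ := hy₀
  have h1 : f' x₀ * g' y₀ = 1 := by
    have := heq x₀ y₀; rw [hx, hy, one_mul] at this; exact this.symm
  have hfx : f' x₀ = 1 := by
    have h2 := hf' x₀; have h3 := hg' y₀
    nlinarith [h2.1, h2.2, h3.1, h3.2]
  have hgy : g' y₀ = 1 := by rw [hfx, one_mul] at h1; exact h1
  constructor
  · intro x
    have := heq x y₀; rw [hy, hgy, mul_one, mul_one] at this; exact this.symm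
  · intro y
    have := heq x₀ y; rw [hx, hfx, one_mul, one_mul] at this; exact this.symm
end

section
/- Let U, V, W be types with U and W nonempty, and let f, f' : U → V → ℝ and g, g' : V → W → ℝ be functions all taking values in (0, 1]. Suppose f(u,v)·g(v,w) = f'(u,v)·g'(v,w) for all u, v, w, and suppose that for every v ∈ V there exist u₀ ∈ U with f(u₀,v) = 1 and w₀ ∈ W with g(v,w₀) = 1. Then f'(u,v) = f(u,v) for all u, v and g'(v,w) = g(v,w) for all v, w. -/
theorem exact_identification_shared_covariate_under_A3
    {U V W : Type*} [Nonempty U] [Nonempty W]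
    (f f' : U → V → ℝ) (g g' : V → W → ℝ)
    (hf : ∀ u v, f u v ∈ Set.Ioc (0 : ℝ) 1) (hf' : ∀ u v, f' u v ∈ Set.Ioc (0 : ℝ) 1)
    (hg : ∀ v w, g v w ∈ Set.Ioc (0 : ℝ) 1) (hg' : ∀ v w, g' v w ∈ Set.Ioc (0 : ℝ) 1)
    (heq : ∀ (u : U) (v : V) (w : W), f u v * g v w = f' u v * g' v w)
    (hattain : ∀ v : V, (∃ u₀ : U, f u₀ v = 1) ∧ (∃ w₀ : W, g v w₀ = 1)) :
    (∀ u v, f' u v = f u v) ∧ (∀ v w, g' v w = g v w) := by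
  have key : ∀ v, (∃ u₀, f u₀ v = 1 ∧ f' u₀ v = 1) ∧ (∃ w₀, g v w₀ = 1 ∧ g' v w₀ = 1) := by
    intro v
    obtain ⟨⟨u₀, hu⟩, ⟨w₀, hw⟩⟩ := hattain v
    have h := heq u₀ v w₀
    rw [hu, hw, one_mul] at h
    have h1 := (hf' u₀ v).2
    have h2 := (hg' v w₀).2
    have h3 := (hf' u₀ v).1
    have h4 := (hg' v w₀).1
    have hfe : f' u₀ v = 1 := by nlinarith
    have hge : g' v w₀ = 1 := by nlinarith
    exact ⟨⟨u₀, hu, hfe⟩, ⟨w₀, hw, hge⟩⟩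
  constructor
  · intro u v
    obtain ⟨_, ⟨w₀, hw, hw'⟩⟩ := key v
    have h := heq u v w₀
    rw [hw, hw', mul_one, mul_one] at h
    exact h.symm
  · intro v w
    obtain ⟨⟨u₀, hu, hu'⟩, _⟩ := key v
    have h := heq u₀ v w
    rw [hu, hu', one_mul, one_mul] at h
    exact h.symm
end

section
/- Let ι be a finite index type, and for each i ∈ ι let Aᵢ be a nonempty type and fᵢ, fᵢ' : Aᵢ → ℝ strictly positive functions. Suppose that for every choice x ∈ ∏ᵢ Aᵢ, ∏ᵢ fᵢ(xᵢ) = ∏ᵢ fᵢ'(xᵢ). Then there exist constants cᵢ > 0 for each i ∈ ι with ∏ᵢ cᵢ = 1 such that fᵢ'(x) = cᵢ·fᵢ(x) for all i ∈ ι and all x ∈ Aᵢ. -/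
theorem finite_product_factorization_identified_up_to_scales
    {ι : Type*} [Fintype ι] (A : ι → Type*) [∀ i, Nonempty (A i)]
    (f f' : ∀ i, A i → ℝ)
    (hf : ∀ i (x : A i), 0 < f i x) (hf' : ∀ i (x : A i), 0 < f' i x)
    (heq : ∀ x : (∀ i, A i), ∏ i, f i (x i) = ∏ i, f' i (x i)) :
    ∃ c : ι → ℝ, (∀ i, 0 < c i) ∧ (∏ i, c i = 1) ∧
      ∀ i (x : A i), f' i x = c i * f i x := by
  classical
  have x₀ : ∀ i, A i := fun i => Classical.arbitrary _
  refine ⟨fun i => f' i (x₀ i) / f i (x₀ i),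
    fun i => div_pos (hf' _ _) (hf _ _), ?_, ?_⟩
  · rw [Finset.prod_div_distrib, ← heq x₀]
    exact div_self (ne_of_gt (Finset.prod_pos fun i _ => hf _ _))
  · intro i x
    have key : ∀ (g : ∀ i, A i → ℝ),
        ∏ j, g j (Function.update x₀ i x j) =
          g i x * ∏ j ∈ Finset.univ.erase i, g j (x₀ j) := by
      intro g
      rw [← Finset.mul_prod_erase Finset.univ _ (Finset.mem_univ i),
        Function.update_self]
      congr 1
      exact Finset.prod_congr rfl fun j hj =>
        congrArg _ (Function.update_of_ne (Finset.ne_of_mem_erase hj) _ _)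
    have h1 := heq (Function.update x₀ i x)
    rw [key f, key f'] at h1
    have h0 := heq x₀
    rw [← Finset.mul_prod_erase Finset.univ _ (Finset.mem_univ i),
      ← Finset.mul_prod_erase Finset.univ (fun j => f' j (x₀ j)) (Finset.mem_univ i)] at h0
    have hpa : (0:ℝ) < ∏ j ∈ Finset.univ.erase i, f j (x₀ j) :=
      Finset.prod_pos fun j _ => hf _ _
    have hpb : (0:ℝ) < ∏ j ∈ Finset.univ.erase i, f' j (x₀ j) :=
      Finset.prod_pos fun j _ => hf' _ _
    have hai := hf i (x₀ i)
    have hbi := hf' i (x₀ i)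
    field_simp
    nlinarith [mul_pos hai hpa, mul_pos hbi hpb, hf i x, hf' i x,
      mul_pos (hf i x) hpa]
end
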